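/- Let e1, e2, e3, e4, e5 be real constants, define E(β) = 1 + ((e1·cos β − e2·sin β)·(e3·cos β + e4·sin β) − (e1·sin β + e2·cos β + e5)·(e4·cos β − e3·sin β)) / (e3·cos β + e4·sin β)², and set p1 = e3² + e1·e3 + e4·e5 − e2·e4, p2 = −4·e3·e4 + 2·e3·e5, p3 = 2·e1·e3 − 2·e2·e4 − 2·e3² + 4·e4², p4 = 4·e3·e4 + 2·e3·e5, p5 = e3² + e1·e3 − e2·e4 − e4·e5. If not all of p1, p2, p3, p4, p5 are zero, then the set of β in [0, 2π) with β ≠ π, e3·cos β + e4·sin β ≠ 0, and E(β) = 0 is finite and has at most 4 elements. -/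

import Mathlib

open Real Polynomial

/-! The Weierstrass substitution `t = tan (β / 2)` turns
`(1 + t²)² · (e3 cos β + e4 sin β)² · E β` into the quartic `p1 t⁴ + p2 t³ + p3 t² + p4 t + p5`,
so the zeros of `E` in `[0, 2π) \ {π}` are sent to roots of a nonzero polynomial of degree at
most four. The map is injective there: `β / 2` ranges over an interval of length `π`, on which
`tan` does not repeat values. -/

noncomputable def quartic {R : Type*} [Semiring R] (a b c d e : R) : R[X] :=
  C a * X ^ 4 + C b * X ^ 3 + C c * X ^ 2 + C d * X + C e

section Quartic

variable {R : Type*} [Semiring R] {a b c d e : R}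

theorem quartic_eq_zero_iff :
    quartic a b c d e = 0 ↔ a = 0 ∧ b = 0 ∧ c = 0 ∧ d = 0 ∧ e = 0 := by
  refine ⟨fun h => ?_, fun ⟨ha, hb, hc, hd, he⟩ => by simp [quartic, ha, hb, hc, hd, he]⟩
  have hcoeff (n : ℕ) : (quartic a b c d e).coeff n = 0 := by rw [h, coeff_zero]
  refine ⟨?_, ?_, ?_, ?_, ?_⟩
  · simpa [quartic, coeff_X, coeff_C] using hcoeff 4
  · simpa [quartic, coeff_X, coeff_C] using hcoeff 3
  · simpa [quartic, coeff_X, coeff_C] using hcoeff 2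
  · simpa [quartic, coeff_X, coeff_C] using hcoeff 1
  · simpa [quartic, coeff_X, coeff_C] using hcoeff 0

theorem natDegree_quartic_le : (quartic a b c d e).natDegree ≤ 4 := by
  unfold quartic; compute_degree

end Quartic

theorem Polynomial.ncard_setOf_isRoot_le_natDegree {R : Type*} [CommRing R] [IsDomain R]
    {p : R[X]} (hp : p ≠ 0) : {x | p.IsRoot x}.ncard ≤ p.natDegree := by
  classical
  have hroots : {x | p.IsRoot x} = ↑p.roots.toFinset := by
    ext x; simp [mem_roots hp]
  rw [hroots, Set.ncard_coe_finset]
  exact (Multiset.toFinset_card_le _).trans p.card_roots'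

theorem Real.eq_of_tan_eq_of_abs_sub_lt_pi {x y : ℝ} (hx : cos x ≠ 0) (hy : cos y ≠ 0)
    (hxy : |x - y| < π) (h : tan x = tan y) : x = y := by
  have hsin : sin (x - y) = 0 := by
    rw [tan_eq_sin_div_cos, tan_eq_sin_div_cos, div_eq_div_iff hx hy] at h
    rw [sin_sub]; linarith
  rw [abs_lt] at hxy
  linarith [(sin_eq_zero_iff_of_lt_of_lt hxy.1 hxy.2).mp hsin]

theorem Real.cos_half_ne_zero_of_mem {β : ℝ} (hβ : β ∈ Set.Ico 0 (2 * π) \ {π}) :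
    cos (β / 2) ≠ 0 := by
  obtain ⟨⟨h0, h2π⟩, hπ⟩ := hβ
  rcases lt_or_gt_of_ne hπ with h | h
  · exact (cos_pos_of_mem_Ioo ⟨by linarith [pi_pos], by linarith⟩).ne'
  · exact (cos_neg_of_pi_div_two_lt_of_lt (by linarith) (by linarith [pi_pos])).ne

theorem Real.injOn_tan_half : Set.InjOn (fun β => tan (β / 2)) (Set.Ico 0 (2 * π) \ {π}) := by
  intro a ha b hb h
  have hab : |a / 2 - b / 2| < π := by
    obtain ⟨⟨ha0, ha2⟩, -⟩ := ha; obtain ⟨⟨hb0, hb2⟩, -⟩ := hb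
    rw [abs_lt]; constructor <;> linarith
  have := eq_of_tan_eq_of_abs_sub_lt_pi (cos_half_ne_zero_of_mem ha) (cos_half_ne_zero_of_mem hb)
    hab h
  linarith

theorem Real.cos_ne_neg_one_of_cos_half_ne_zero {β : ℝ} (h : cos (β / 2) ≠ 0) :
    cos β ≠ -1 := by
  have hcos : cos β = 2 * cos (β / 2) ^ 2 - 1 := by
    rw [← cos_two_mul, mul_div_cancel₀ _ two_ne_zero]
  rw [hcos]
  intro h'
  exact h (pow_eq_zero_iff two_ne_zero |>.mp (by linarith))

noncomputable def tanHalfQuartic (e1 e2 e3 e4 e5 : ℝ) : ℝ[X] :=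
  quartic (e3 ^ 2 + e1 * e3 + e4 * e5 - e2 * e4) (-(4 * e3 * e4) + 2 * e3 * e5)
    (2 * e1 * e3 - 2 * e2 * e4 - 2 * e3 ^ 2 + 4 * e4 ^ 2) (4 * e3 * e4 + 2 * e3 * e5)
    (e3 ^ 2 + e1 * e3 - e2 * e4 - e4 * e5)

theorem eval_tanHalfQuartic {e1 e2 e3 e4 e5 t c s : ℝ} (hc : c = (1 - t ^ 2) / (1 + t ^ 2))
    (hs : s = 2 * t / (1 + t ^ 2)) :
    (tanHalfQuartic e1 e2 e3 e4 e5).eval t = (1 + t ^ 2) ^ 2 * ((e3 * c + e4 * s) ^ 2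
      + ((e1 * c - e2 * s) * (e3 * c + e4 * s) - (e1 * s + e2 * c + e5) * (e4 * c - e3 * s))) := by
  have : 1 + t ^ 2 ≠ 0 := by positivity
  subst hc hs
  simp only [tanHalfQuartic, quartic, eval_add, eval_mul, eval_pow, eval_C, eval_X]
  field_simp
  ring

theorem isRoot_tanHalfQuartic {e1 e2 e3 e4 e5 β : ℝ} (hβ : cos (β / 2) ≠ 0)
    (hD : e3 * cos β + e4 * sin β ≠ 0)
    (hE : 1 + ((e1 * cos β - e2 * sin β) * (e3 * cos β + e4 * sin β)
      - (e1 * sin β + e2 * cos β + e5) * (e4 * cos β - e3 * sin β))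
        / (e3 * cos β + e4 * sin β) ^ 2 = 0) :
    (tanHalfQuartic e1 e2 e3 e4 e5).IsRoot (tan (β / 2)) := by
  rw [IsRoot, eval_tanHalfQuartic
    (cos_eq_two_mul_tan_half_div_one_sub_tan_half_sq β (cos_ne_neg_one_of_cos_half_ne_zero hβ))
    (sin_eq_two_mul_tan_half_div_one_add_tan_half_sq β)]
  set D := e3 * cos β + e4 * sin β
  set N := (e1 * cos β - e2 * sin β) * D
    - (e1 * sin β + e2 * cos β + e5) * (e4 * cos β - e3 * sin β)
  have hsum : D ^ 2 + N = 0 := by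
    field_simp at hE
    linarith
  rw [hsum, mul_zero]

theorem derivative_zeros_finite_card_le_four
    (e1 e2 e3 e4 e5 : ℝ)
    (E : ℝ → ℝ)
    (hE : ∀ β, E β = 1 + ((e1 * Real.cos β - e2 * Real.sin β)
            * (e3 * Real.cos β + e4 * Real.sin β)
          - (e1 * Real.sin β + e2 * Real.cos β + e5)
            * (e4 * Real.cos β - e3 * Real.sin β))
        / (e3 * Real.cos β + e4 * Real.sin β) ^ 2)
    (hp : ¬ (e3 ^ 2 + e1 * e3 + e4 * e5 - e2 * e4 = 0
        ∧ -(4 * e3 * e4) + 2 * e3 * e5 = 0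
        ∧ 2 * e1 * e3 - 2 * e2 * e4 - 2 * e3 ^ 2 + 4 * e4 ^ 2 = 0
        ∧ 4 * e3 * e4 + 2 * e3 * e5 = 0
        ∧ e3 ^ 2 + e1 * e3 - e2 * e4 - e4 * e5 = 0)) :
    ({β ∈ Set.Ico (0 : ℝ) (2 * π) | β ≠ π
        ∧ e3 * Real.cos β + e4 * Real.sin β ≠ 0 ∧ E β = 0}).Finite
    ∧ ({β ∈ Set.Ico (0 : ℝ) (2 * π) | β ≠ π
        ∧ e3 * Real.cos β + e4 * Real.sin β ≠ 0 ∧ E β = 0}).ncard ≤ 4 := by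
  set S := {β ∈ Set.Ico (0 : ℝ) (2 * π) | β ≠ π
    ∧ e3 * Real.cos β + e4 * Real.sin β ≠ 0 ∧ E β = 0}
  set P := tanHalfQuartic e1 e2 e3 e4 e5
  have hP : P ≠ 0 := fun h => hp (quartic_eq_zero_iff.mp h)
  have hS : S ⊆ Set.Ico 0 (2 * π) \ {π} := fun β ⟨hβ, hπ, _⟩ => ⟨hβ, hπ⟩
  have hinj : Set.InjOn (fun β => tan (β / 2)) S := injOn_tan_half.mono hS
  have hmaps : Set.MapsTo (fun β => tan (β / 2)) S {t | P.IsRoot t} :=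
    fun β hβ => isRoot_tanHalfQuartic (cos_half_ne_zero_of_mem (hS hβ)) hβ.2.2.1
      (hE β ▸ hβ.2.2.2)
  have hroots : {t | P.IsRoot t}.Finite := finite_setOfPred_isRoot hP
  refine ⟨hroots.of_injOn hmaps hinj, ?_⟩
  calc S.ncard ≤ {t | P.IsRoot t}.ncard := Set.ncard_le_ncard_of_injOn _ hmaps hinj hroots
    _ ≤ P.natDegree := ncard_setOf_isRoot_le_natDegree hP
    _ ≤ 4 := natDegree_quartic_le
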